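/- Supersaturation: Let k ≥ 2 and N ∈ ℕ be fixed, let F be a nonempty collection of k-colourings of K_N, and set P = Forb(F); assume P_n ≠ ∅ for all n so that π(P) is defined. For every ε with 0 < ε < 1 there exist constants n₀ ∈ ℕ and C₀ > 0 such that for all n ≥ n₀ and every k-colouring template t for K_n with Ent(t) > (π(P)+ε)·C(n,2), the number of pairs (φ, c) with φ ∈ binom(K_n, K_N), c ∈ F and c ∈ ⟨t|φ⟩ is at least C₀·ε·C(n,N). -/

import Mathlib

/-!
Fix `m ≥ max 2 N` with `ex(m, Forb F) < (π + ε/2) C(m,2)`. Entropy is additive over edges and every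
edge of `K_n` lies in `C(n-2, m-2)` copies of `K_m`, so averaging `Ent (t|φ)` over the `C(n,m)`
copies `φ` shows that more than an `ε/2` fraction of them have `Ent (t|φ) > ex(m, Forb F)`. Each
such restriction has a realisation containing a member of `F`, i.e. a bad pair inside `φ`. A bad
pair lies inside only `C(n-N, m-N)` copies, so double counting gives at least
`(ε/2) C(n,m) / C(n-N, m-N) = (ε/2) C(n,N) / C(m,N)` bad pairs.
-/

open Filter

abbrev Edge (n : ℕ) := {p : Fin n × Fin n // p.1 < p.2}

abbrev Colouring (k n : ℕ) := Edge n → Fin k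

abbrev Template (k n : ℕ) := Edge n → Finset (Fin k)

def Proper {k n : ℕ} (t : Template k n) : Prop := ∀ e, (t e).Nonempty

def Realises {k n : ℕ} (c : Colouring k n) (t : Template k n) : Prop := ∀ e, c e ∈ t e

noncomputable def Ent {k n : ℕ} (t : Template k n) : ℝ :=
  ∑ e : Edge n, Real.logb k ((t e).card)

def Edge.map {m n : ℕ} (φ : Fin m → Fin n) (h : StrictMono φ) (e : Edge m) : Edge n :=
  ⟨(φ e.1.1, φ e.1.2), h e.2⟩

def restrictC {k m n : ℕ} (c : Colouring k n) (φ : Fin m → Fin n) (h : StrictMono φ) :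
    Colouring k m := fun e => c (Edge.map φ h e)

def restrictT {k m n : ℕ} (t : Template k n) (φ : Fin m → Fin n) (h : StrictMono φ) :
    Template k m := fun e => t (Edge.map φ h e)

def Forb {k N : ℕ} (F : Set (Colouring k N)) (n : ℕ) : Set (Colouring k n) :=
  {c | ∀ (φ : Fin N → Fin n) (h : StrictMono φ), restrictC c φ h ∉ F}

def OrderHereditary {k : ℕ} (P : ∀ n, Set (Colouring k n)) : Prop :=
  ∀ (m n : ℕ) (φ : Fin m → Fin n) (h : StrictMono φ) (c : Colouring k n),
    c ∈ P n → restrictC c φ h ∈ P m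

noncomputable def exEnt {k n : ℕ} (A : Set (Colouring k n)) : ℝ :=
  sSup {x | ∃ t : Template k n, Proper t ∧ (∀ c, Realises c t → c ∈ A) ∧ Ent t = x}

noncomputable def badPairs {k N n : ℕ} (t : Template k n) (F : Set (Colouring k N)) : ℕ :=
  Set.ncard {p : (Fin N → Fin n) × Colouring k N |
    ∃ h : StrictMono p.1, p.2 ∈ F ∧ Realises p.2 (restrictT t p.1 h)}

def TemplateLE {k m n : ℕ} (t : Template k m) (t' : Template k n) : Prop :=
  ∃ (φ : Fin m → Fin n) (h : StrictMono φ), ∀ e, t e ⊆ restrictT t' φ h e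

def IsContainerFamily {k n : ℕ} (T : Finset (Template k n)) (A : Set (Colouring k n)) : Prop :=
  ∀ t : Template k n, Proper t → (∀ c, Realises c t → c ∈ A) → ∃ t' ∈ T, TemplateLE t t'

open Finset

theorem Finset.card_filter_subset_powersetCard {α : Type*} [DecidableEq α] {u w : Finset α}
    {m : ℕ} (hwu : w ⊆ u) (hwm : #w ≤ m) :
    #{s ∈ u.powersetCard m | w ⊆ s} = (#u - #w).choose (m - #w) := by
  rw [← card_sdiff_of_subset hwu, ← card_powersetCard]
  refine card_nbij' (· \ w) (· ∪ w) (fun s hs => ?_) (fun s hs => ?_) (fun s hs => ?_)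
    (fun s hs => ?_) <;>
    simp only [mem_coe, mem_filter, mem_powersetCard] at hs ⊢
  · exact ⟨sdiff_subset_sdiff hs.1.1 le_rfl, by rw [card_sdiff_of_subset hs.2, hs.1.2]⟩
  · have hdisj : Disjoint s w := disjoint_of_subset_left hs.1 sdiff_disjoint
    refine ⟨⟨union_subset (hs.1.trans sdiff_subset) hwu, ?_⟩, subset_union_right⟩
    rw [card_union_of_disjoint hdisj, hs.2, Nat.sub_add_cancel hwm]
  · exact sdiff_union_of_subset hs.2
  · exact union_sdiff_cancel_right (disjoint_of_subset_left hs.1 sdiff_disjoint)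

open Classical in
theorem card_filter_subset_range_orderEmbedding {m n : ℕ} {w : Finset (Fin n)} (hwm : #w ≤ m) :
    #{φ : Fin m ↪o Fin n | ↑w ⊆ Set.range φ} = (n - #w).choose (m - #w) := by
  have h := card_filter_subset_powersetCard (subset_univ w) hwm
  rw [card_univ, Fintype.card_fin] at h
  rw [← h]
  refine card_bij (fun φ _ => univ.image φ) (fun φ hφ => ?_) (fun φ _ ψ _ h => ?_)
    (fun s hs => ?_)
  · simp only [mem_filter, mem_univ, true_and, mem_powersetCard, subset_univ] at hφ ⊢
    refine ⟨by rw [card_image_of_injective _ φ.injective, card_fin], ?_⟩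
    rw [← coe_subset, coe_image, coe_univ, Set.image_univ]
    exact hφ
  · rw [← OrderEmbedding.range_inj, ← Set.image_univ, ← Set.image_univ, ← coe_univ,
      ← coe_image, ← coe_image, h]
  · simp only [mem_filter, mem_powersetCard, subset_univ, true_and] at hs
    refine ⟨s.orderEmbOfFin hs.1, ?_, ?_⟩
    · simp only [mem_filter, mem_univ, true_and, range_orderEmbOfFin]
      exact coe_subset.mpr hs.2
    · rw [← coe_inj, coe_image, coe_univ, Set.image_univ, range_orderEmbOfFin]

theorem card_edge (n : ℕ) : Fintype.card (Edge n) = n.choose 2 := by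
  have e : Edge n ≃ Σ b : Fin n, Fin b.1 :=
    { toFun := fun e => ⟨e.1.2, ⟨e.1.1.1, e.2⟩⟩
      invFun := fun x => ⟨(⟨x.2.1, x.2.2.trans x.1.2⟩, x.1), x.2.2⟩
      left_inv := fun e => rfl
      right_inv := fun x => rfl }
  rw [Fintype.card_congr e, Fintype.card_sigma]
  simp only [Fintype.card_fin]
  rw [Fin.sum_univ_eq_sum_range (fun i => i) n, Nat.choose_two_right]
  have := Finset.sum_range_id_mul_two n
  omega

theorem card_orderEmbedding_fin (m n : ℕ) : Fintype.card (Fin m ↪o Fin n) = n.choose m := by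
  classical
  simpa using card_filter_subset_range_orderEmbedding (m := m) (w := (∅ : Finset (Fin n)))

theorem card_filter_edgeMap_eq {m n : ℕ} (hm : 2 ≤ m) (e : Edge n) :
    #{p : (Fin m ↪o Fin n) × Edge m | Edge.map p.1 p.1.strictMono p.2 = e} =
      (n - 2).choose (m - 2) := by
  classical
  have hcard : #{e.1.1, e.1.2} = 2 := card_pair e.2.ne
  rw [← hcard, ← card_filter_subset_range_orderEmbedding (hcard ▸ hm)]
  have hmap : ∀ p : (Fin m ↪o Fin n) × Edge m, Edge.map p.1 p.1.strictMono p.2 = e ↔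
      p.1 p.2.1.1 = e.1.1 ∧ p.1 p.2.1.2 = e.1.2 := fun p => by
    rw [Subtype.ext_iff, Prod.ext_iff]; rfl
  refine card_bij (fun p _ => p.1) (fun p hp => ?_) (fun p hp q hq hpq => ?_) (fun φ hφ => ?_)
  · simp only [mem_filter, mem_univ, true_and, hmap] at hp ⊢
    rw [coe_pair, Set.insert_subset_iff, Set.singleton_subset_iff]
    exact ⟨⟨_, hp.1⟩, ⟨_, hp.2⟩⟩
  · simp only [mem_filter, mem_univ, true_and, hmap] at hp hq
    obtain ⟨φ, e₁⟩ := p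
    obtain ⟨ψ, e₂⟩ := q
    obtain rfl : φ = ψ := hpq
    refine Prod.ext rfl (Subtype.ext (Prod.ext ?_ ?_))
    · exact φ.injective (hp.1.trans hq.1.symm)
    · exact φ.injective (hp.2.trans hq.2.symm)
  · simp only [mem_filter, mem_univ, true_and, coe_pair, Set.insert_subset_iff,
      Set.singleton_subset_iff] at hφ
    obtain ⟨⟨i, hi⟩, ⟨j, hj⟩⟩ := hφ
    have hij : i < j := by rw [← φ.lt_iff_lt, hi, hj]; exact e.2
    exact ⟨(φ, ⟨(i, j), hij⟩), by simp only [mem_filter, mem_univ, true_and, hmap]; exact ⟨hi, hj⟩,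
      rfl⟩

theorem sum_orderEmbedding_sum_edgeMap {M : Type*} [AddCommMonoid M] {m n : ℕ} (hm : 2 ≤ m)
    (f : Edge n → M) :
    ∑ φ : Fin m ↪o Fin n, ∑ e, f (Edge.map φ φ.strictMono e) =
      (n - 2).choose (m - 2) • ∑ e, f e := by
  classical
  rw [← Fintype.sum_prod_type', ← sum_fiberwise' univ _ f, smul_sum]
  refine sum_congr rfl fun e _ => ?_
  rw [sum_const, card_filter_edgeMap_eq hm]

theorem Finset.sum_le_card_filter_lt_mul_add {ι : Type*} (s : Finset ι) {f : ι → ℝ} {M b : ℝ}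
    (hb : 0 ≤ b) (hM : ∀ i ∈ s, f i ≤ M) :
    ∑ i ∈ s, f i ≤ #{i ∈ s | b < f i} * M + #s * b := by
  rw [← sum_filter_add_sum_filter_not s (b < f ·)]
  gcongr ?_ + ?_
  · rw [← nsmul_eq_mul]
    exact sum_le_card_nsmul _ _ _ fun i hi => hM i (mem_filter.mp hi).1
  · calc ∑ i ∈ s with ¬b < f i, f i ≤ #{i ∈ s | ¬b < f i} * b := by
          rw [← nsmul_eq_mul]
          exact sum_le_card_nsmul _ _ _ fun i hi => not_lt.mp (mem_filter.mp hi).2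
      _ ≤ #s * b := by gcongr; exact filter_subset _ _

section Entropy

variable {k n : ℕ}

theorem logb_card_nonneg (hk : 2 ≤ k) {s : Finset (Fin k)} (hs : s.Nonempty) :
    0 ≤ Real.logb k #s :=
  Real.logb_nonneg (by exact_mod_cast hk) (by exact_mod_cast hs.card_pos)

theorem logb_card_le_one (hk : 2 ≤ k) (s : Finset (Fin k)) : Real.logb k #s ≤ 1 := by
  have hb : (1 : ℝ) < k := by exact_mod_cast hk
  rcases s.eq_empty_or_nonempty with rfl | hs
  · simp
  calc Real.logb k #s ≤ Real.logb k k :=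
        Real.logb_le_logb_of_le hb (by exact_mod_cast hs.card_pos)
          (by exact_mod_cast (card_le_univ s).trans_eq (Fintype.card_fin k))
    _ = 1 := Real.logb_self_eq_one hb

theorem ent_nonneg (hk : 2 ≤ k) {t : Template k n} (ht : Proper t) : 0 ≤ Ent t :=
  sum_nonneg fun e _ => logb_card_nonneg hk (ht e)

theorem ent_le_choose_two (hk : 2 ≤ k) (t : Template k n) : Ent t ≤ n.choose 2 := by
  calc Ent t ≤ ∑ _e : Edge n, (1 : ℝ) := sum_le_sum fun e _ => logb_card_le_one hk (t e)
    _ = n.choose 2 := by simp [card_edge]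

theorem bddAbove_ent_templates (hk : 2 ≤ k) (A : Set (Colouring k n)) :
    BddAbove {x | ∃ t : Template k n, Proper t ∧ (∀ c, Realises c t → c ∈ A) ∧ Ent t = x} :=
  ⟨n.choose 2, by rintro x ⟨t, _, _, rfl⟩; exact ent_le_choose_two hk t⟩

-- `sSup ∅ = 0` covers the sets `A` that contain the realisations of no proper template.
theorem exEnt_nonneg (hk : 2 ≤ k) (A : Set (Colouring k n)) : 0 ≤ exEnt A :=
  Real.sSup_nonneg <| by rintro x ⟨t, ht, _, rfl⟩; exact ent_nonneg hk ht

theorem exists_realises_notMem_of_exEnt_lt (hk : 2 ≤ k) {A : Set (Colouring k n)}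
    {t : Template k n} (ht : Proper t) (hA : exEnt A < Ent t) : ∃ c, Realises c t ∧ c ∉ A := by
  by_contra! h
  exact hA.not_ge (le_csSup (bddAbove_ent_templates hk A) ⟨t, ht, h, rfl⟩)

end Entropy

theorem sum_ent_restrictT {k m n : ℕ} (hm : 2 ≤ m) (t : Template k n) :
    ∑ φ : Fin m ↪o Fin n, Ent (restrictT t φ φ.strictMono) = (n - 2).choose (m - 2) * Ent t := by
  rw [← nsmul_eq_mul]
  exact sum_orderEmbedding_sum_edgeMap hm fun e => Real.logb k #(t e)

theorem lt_card_filter_lt_ent_restrictT {k m n : ℕ} (hk : 2 ≤ k) (hm : 2 ≤ m) (hmn : m ≤ n)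
    {t : Template k n} {γ δ : ℝ} (hγ : 0 ≤ γ) (ht : (γ + δ) * n.choose 2 < Ent t) :
    δ * n.choose m < #{φ : Fin m ↪o Fin n | γ * m.choose 2 < Ent (restrictT t φ φ.strictMono)} := by
  have hm₀ : (0 : ℝ) < m.choose 2 := by exact_mod_cast Nat.choose_pos hm
  have hD : (0 : ℝ) < (n - 2).choose (m - 2) := by
    exact_mod_cast Nat.choose_pos (Nat.sub_le_sub_right hmn 2)
  have hchoose : (n.choose m * m.choose 2 : ℝ) = n.choose 2 * (n - 2).choose (m - 2) := by
    exact_mod_cast Nat.choose_mul hm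
  have hsum := sum_le_card_filter_lt_mul_add univ (mul_nonneg hγ hm₀.le)
    fun (φ : Fin m ↪o Fin n) _ => ent_le_choose_two hk (restrictT t φ φ.strictMono)
  rw [sum_ent_restrictT hm, card_univ, card_orderEmbedding_fin] at hsum
  have hlower := mul_lt_mul_of_pos_left ht hD
  have hrewrite : ((n - 2).choose (m - 2) : ℝ) * ((γ + δ) * n.choose 2) =
      (γ + δ) * (n.choose m * m.choose 2) := by rw [hchoose]; ring
  refine lt_of_mul_lt_mul_right ?_ hm₀.le
  linarith

section BadPairs

variable {k N m n : ℕ}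

def IsBadPair (t : Template k n) (F : Set (Colouring k N))
    (p : (Fin N → Fin n) × Colouring k N) : Prop :=
  ∃ h : StrictMono p.1, p.2 ∈ F ∧ Realises p.2 (restrictT t p.1 h)

theorem badPairs_eq_ncard (t : Template k n) (F : Set (Colouring k N)) :
    badPairs t F = {p | IsBadPair t F p}.ncard :=
  rfl

theorem exists_isBadPair_of_exEnt_lt (hk : 2 ≤ k) {F : Set (Colouring k N)} {t : Template k n}
    (ht : Proper t) (φ : Fin m ↪o Fin n)
    (hφ : exEnt (Forb F m) < Ent (restrictT t φ φ.strictMono)) :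
    ∃ p, IsBadPair t F p ∧ Set.range p.1 ⊆ Set.range φ := by
  obtain ⟨c, hc, hcF⟩ := exists_realises_notMem_of_exEnt_lt hk (fun e => ht _) hφ
  simp only [Forb, Set.mem_ofPred_eq, not_forall, not_not] at hcF
  obtain ⟨ψ, hψ, hψF⟩ := hcF
  exact ⟨(φ ∘ ψ, restrictC c ψ hψ), ⟨φ.strictMono.comp hψ, hψF, fun e => hc (Edge.map ψ hψ e)⟩,
    Set.range_comp_subset_range ψ φ⟩

open Classical in
theorem card_filter_exists_isBadPair_le (hNm : N ≤ m) (t : Template k n)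
    (F : Set (Colouring k N)) :
    #{φ : Fin m ↪o Fin n | ∃ p, IsBadPair t F p ∧ Set.range p.1 ⊆ Set.range φ} ≤
      (n - N).choose (m - N) * badPairs t F := by
  rw [badPairs_eq_ncard, Set.ncard_eq_toFinset_card', mul_comm, ← mul_one #(filter _ _)]
  refine card_mul_le_card_mul (fun (φ : Fin m ↪o Fin n) (p : (Fin N → Fin n) × Colouring k N) =>
    Set.range p.1 ⊆ Set.range φ) (fun φ hφ => ?_)
    (fun p hp => ?_)
  · obtain ⟨p, hp, hpφ⟩ := (mem_filter.mp hφ).2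
    exact card_pos.mpr ⟨p, mem_filter.mpr ⟨Set.mem_toFinset.mpr hp, hpφ⟩⟩
  · obtain ⟨hmono, -⟩ := Set.mem_toFinset.mp hp
    have hcard : #(univ.image p.1) = N := by
      rw [card_image_of_injective _ hmono.injective, card_fin]
    calc #(bipartiteBelow _ _ p) ≤ #{φ : Fin m ↪o Fin n | ↑(univ.image p.1) ⊆ Set.range φ} := by
          refine card_le_card fun φ hφ => ?_
          rw [coe_image, coe_univ, Set.image_univ]
          simpa using (mem_filter.mp hφ).2
      _ = (n - N).choose (m - N) := by
          rw [card_filter_subset_range_orderEmbedding (hcard.trans_le hNm), hcard]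

open Classical in
theorem mul_choose_le_choose_mul_badPairs (hNm : N ≤ m) (hmn : m ≤ n) (t : Template k n)
    (F : Set (Colouring k N)) {δ : ℝ}
    (h : δ * n.choose m ≤
      #{φ : Fin m ↪o Fin n | ∃ p, IsBadPair t F p ∧ Set.range p.1 ⊆ Set.range φ}) :
    δ * n.choose N ≤ m.choose N * badPairs t F := by
  have hD : (0 : ℝ) < (n - N).choose (m - N) := by
    exact_mod_cast Nat.choose_pos (Nat.sub_le_sub_right hmn N)
  have hchoose : (n.choose m * m.choose N : ℝ) = n.choose N * (n - N).choose (m - N) := by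
    exact_mod_cast Nat.choose_mul hNm
  have hcount : (#{φ : Fin m ↪o Fin n | ∃ p, IsBadPair t F p ∧ Set.range p.1 ⊆ Set.range φ} : ℝ)
      ≤ (n - N).choose (m - N) * badPairs t F := by
    exact_mod_cast card_filter_exists_isBadPair_le hNm t F
  refine le_of_mul_le_mul_right ?_ hD
  calc δ * n.choose N * (n - N).choose (m - N) = δ * n.choose m * m.choose N := by
        rw [mul_assoc, ← hchoose]; ring
    _ ≤ (n - N).choose (m - N) * badPairs t F * m.choose N := by
        gcongr ?_ * _
        exact h.trans hcount
    _ = m.choose N * badPairs t F * (n - N).choose (m - N) := by ring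

end BadPairs

theorem supersaturation_general (k N : ℕ) (hk : 2 ≤ k)
    (F : Set (Colouring k N)) (π : ℝ)
    (hπ : Tendsto (fun n => exEnt (Forb F n) / (n.choose 2 : ℝ)) atTop (nhds π))
    (ε : ℝ) (hε0 : 0 < ε) :
    ∃ (n₀ : ℕ) (C₀ : ℝ), 0 < C₀ ∧ ∀ n, n₀ ≤ n → ∀ t : Template k n, Proper t →
      (π + ε) * (n.choose 2 : ℝ) < Ent t →
      C₀ * ε * (n.choose N : ℝ) ≤ (badPairs t F : ℝ) := by
  obtain ⟨m, hm, hmax⟩ := ((hπ.eventually_lt_const (by linarith : π < π + ε / 2)).and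
    (eventually_ge_atTop (max 2 N))).exists
  have hm₂ : 2 ≤ m := le_of_max_le_left hmax
  have hNm : N ≤ m := le_of_max_le_right hmax
  have hm₀ : (0 : ℝ) < m.choose 2 := by exact_mod_cast Nat.choose_pos hm₂
  have hγ : 0 ≤ π + ε / 2 := (div_nonneg (exEnt_nonneg hk _) hm₀.le).trans hm.le
  have hexm : exEnt (Forb F m) < (π + ε / 2) * m.choose 2 := (div_lt_iff₀ hm₀).mp hm
  have hmN : (0 : ℝ) < m.choose N := by exact_mod_cast Nat.choose_pos hNm
  refine ⟨m, 1 / (2 * m.choose N), by positivity, fun n hmn t ht hEnt => ?_⟩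
  have hdense := lt_card_filter_lt_ent_restrictT hk hm₂ hmn hγ (δ := ε / 2)
    (by rwa [add_assoc, add_halves])
  classical
  have hsub : ∀ φ ∈ (univ : Finset (Fin m ↪o Fin n)),
      (π + ε / 2) * m.choose 2 < Ent (restrictT t φ φ.strictMono) →
        ∃ p, IsBadPair t F p ∧ Set.range p.1 ⊆ Set.range φ :=
    fun φ _ hφ => exists_isBadPair_of_exEnt_lt hk ht φ (hexm.trans hφ)
  have hbad := mul_choose_le_choose_mul_badPairs hNm hmn t F
    (hdense.le.trans (by exact_mod_cast card_le_card (monotone_filter_right _ hsub)))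
  rw [one_div_mul_eq_div, div_mul_eq_mul_div, div_le_iff₀ (by positivity)]
  linarith

/-- Supersaturation (Lemma 2.12). -/
theorem supersaturation (k N : ℕ) (hk : 2 ≤ k)
    (F : Set (Colouring k N)) (hF : F.Nonempty)
    (hne : ∀ n, (Forb F n).Nonempty) (π : ℝ)
    (hπ : Tendsto (fun n => exEnt (Forb F n) / (n.choose 2 : ℝ)) atTop (nhds π))
    (ε : ℝ) (hε0 : 0 < ε) (hε1 : ε < 1) :
    ∃ (n₀ : ℕ) (C₀ : ℝ), 0 < C₀ ∧ ∀ n, n₀ ≤ n → ∀ t : Template k n, Proper t →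
      (π + ε) * (n.choose 2 : ℝ) < Ent t →
      C₀ * ε * (n.choose N : ℝ) ≤ (badPairs t F : ℝ) :=
  supersaturation_general k N hk F π hπ ε hε0
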